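/- The operator Θ_i admits the alternative expression Θ_i = -1 - (A/(1-β/2) + z_{i+1} - z_i)(A + z_i - z_{i+1}) ∂_i ∘ (multiplication by 1/(A + z_i - z_{i+1})), where ∂_i p = (p - τ_i p)/(z_i - z_{i+1}) is the divided difference operator. -/
import Mathlib


/- STATEMENT 1: Alternative expression for Θ_i in terms of the divided
difference operator ∂_i. -/

open MvPolynomial

noncomputable section

/-- The field of rational functions in variables `z_i` (i : ℕ) and `A, β` over ℚ. -/
abbrev BrauerField : Type := FractionRing (MvPolynomial (ℕ ⊕ Fin 2) ℚ)

def zVar (i : ℕ) : BrauerField :=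
  algebraMap (MvPolynomial (ℕ ⊕ Fin 2) ℚ) BrauerField (X (Sum.inl i))

def Avar : BrauerField :=
  algebraMap (MvPolynomial (ℕ ⊕ Fin 2) ℚ) BrauerField (X (Sum.inr 0))

def betaVar : BrauerField :=
  algebraMap (MvPolynomial (ℕ ⊕ Fin 2) ℚ) BrauerField (X (Sum.inr 1))

/-- `τ i`: the field automorphism exchanging `z i` and `z (i+1)`. -/
def tau (i : ℕ) : BrauerField ≃+* BrauerField :=
  IsFractionRing.ringEquivOfRingEquiv
    (MvPolynomial.renameEquiv ℚ
      (Equiv.sumCongr (Equiv.swap i (i+1)) (Equiv.refl (Fin 2)))).toRingEquiv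

/-- The operator `Θ i`. -/
def Theta (i : ℕ) (p : BrauerField) : BrauerField :=
  ((Avar + zVar i - zVar (i+1)) * (Avar + (1 - betaVar/2) * (zVar (i+1) - zVar i)) * tau i p
      - Avar * (Avar - zVar i + zVar (i+1)) * p) /
    ((1 - betaVar/2) * (zVar i - zVar (i+1)) * (Avar - zVar i + zVar (i+1)))

/-- The divided difference operator `∂ i p = (p - τ_i p)/(z_i - z_{i+1})`. -/
def ddiff (i : ℕ) (p : BrauerField) : BrauerField :=
  (p - tau i p) / (zVar i - zVar (i+1))

lemma tau_zi (i : ℕ) : tau i (zVar i) = zVar (i+1) := by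
  rw [tau, zVar, IsFractionRing.ringEquivOfRingEquiv_algebraMap]
  simp [zVar]

lemma tau_zi1 (i : ℕ) : tau i (zVar (i+1)) = zVar i := by
  rw [tau, zVar, IsFractionRing.ringEquivOfRingEquiv_algebraMap]
  simp [zVar]

lemma tau_A (i : ℕ) : tau i Avar = Avar := by
  rw [tau, Avar, IsFractionRing.ringEquivOfRingEquiv_algebraMap]
  simp [Avar, Equiv.swap_apply_of_ne_of_ne]

lemma tau_beta (i : ℕ) : tau i betaVar = betaVar := by
  rw [tau, betaVar, IsFractionRing.ringEquivOfRingEquiv_algebraMap]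
  simp [betaVar, Equiv.swap_apply_of_ne_of_ne]

lemma algMap_ne {q : MvPolynomial (ℕ ⊕ Fin 2) ℚ} (h : q ≠ 0) :
    algebraMap (MvPolynomial (ℕ ⊕ Fin 2) ℚ) BrauerField q ≠ 0 := by
  simpa using h

lemma hz (i : ℕ) : zVar i - zVar (i+1) ≠ 0 := by
  rw [zVar, zVar, ← map_sub]
  apply algMap_ne
  intro h
  have := congrArg (eval (fun v => if v = Sum.inl i then (1:ℚ) else 0)) h
  simp [Nat.succ_ne_self i] at this

lemma hAz (i : ℕ) : Avar + zVar i - zVar (i+1) ≠ 0 := by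
  rw [Avar, zVar, zVar, ← map_add, ← map_sub]
  apply algMap_ne
  intro h
  have := congrArg (eval (fun v => if v = Sum.inr (0:Fin 2) then (1:ℚ) else 0)) h
  simp at this

lemma hAz' (i : ℕ) : Avar - zVar i + zVar (i+1) ≠ 0 := by
  rw [Avar, zVar, zVar, ← map_sub, ← map_add]
  apply algMap_ne
  intro h
  have := congrArg (eval (fun v => if v = Sum.inr (0:Fin 2) then (1:ℚ) else 0)) h
  simp at this

lemma hbeta : (1:BrauerField) - betaVar / 2 ≠ 0 := by
  intro h
  have h2 : betaVar = 2 := by field_simp at h; linear_combination -h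
  have h2' : algebraMap (MvPolynomial (ℕ ⊕ Fin 2) ℚ) BrauerField (X (Sum.inr 1) - C 2) = 0 := by
    rw [map_sub, ← betaVar, h2,
      show (C (2:ℚ) : MvPolynomial (ℕ ⊕ Fin 2) ℚ) = 2 from by simp [map_ofNat],
      map_ofNat, sub_self]
  rw [IsFractionRing.to_map_eq_zero_iff] at h2'
  have := congrArg (eval (fun _ => (0:ℚ))) h2'
  simp at this

lemma key {K : Type*} [Field K] (a z w b p q : K) (h1 : 1 - b/2 ≠ 0)
    (h2 : z - w ≠ 0) (h3 : a + z - w ≠ 0) (h4 : a - z + w ≠ 0) (h5 : a + w - z ≠ 0) :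
    ((a + z - w) * (a + (1 - b/2) * (w - z)) * q - a * (a - z + w) * p) /
      ((1 - b/2) * (z - w) * (a - z + w)) =
    -p - (a / (1 - b/2) + w - z) * (a + z - w) *
        ((p / (a + z - w) - q / (a + w - z)) / (z - w)) := by
  field_simp
  ring

/-- `Θ_i = -1 - (A/(1-β/2) + z_{i+1} - z_i)(A + z_i - z_{i+1}) ∂_i ∘ (mult. by 1/(A+z_i-z_{i+1}))`. -/
theorem theta_alt_expression (i : ℕ) (p : BrauerField) :
    Theta i p =
      -p - (Avar / (1 - betaVar/2) + zVar (i+1) - zVar i) * (Avar + zVar i - zVar (i+1)) *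
        ddiff i (p / (Avar + zVar i - zVar (i+1))) := by
  have h1 := hbeta
  have h2 := hz i
  have h3 := hAz i
  have h4 := hAz' i
  have h5 : Avar + zVar (i+1) - zVar i ≠ 0 := fun h => h4 (by linear_combination h)
  rw [Theta, ddiff]
  simp only [map_div₀, map_sub, map_add, tau_A, tau_zi, tau_zi1]
  exact key Avar (zVar i) (zVar (i+1)) betaVar p (tau i p) h1 h2 h3 h4 h5

end
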